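/- Let u₁, u₂, … be a sequence of points in ℝ^d with ‖u_n‖ ≤ 1 for all n, such that u₁,…,u_d are linearly independent. For n > d define y_n = (u₁u₁ᵗ + u₂u₂ᵗ + ⋯ + u_{n-1}u_{n-1}ᵗ)⁻¹ u_n. Then y_n → 0 as n → ∞. -/

import Mathlib

/-!
The matrices `S n = ∑_{i<n} u i (u i)ᵀ` increase in the Loewner order, so once they are positive
definite their inverses decrease and converge to some `M ≥ 0`. Since `trace (S n⁻¹ * S n) = d`,
we have `∑_{i<n} u iᵀ S n⁻¹ u i = d`, hence `∑_i u iᵀ M u i ≤ d`. Thus `u nᵀ M u n → 0`, which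
for `M ≥ 0` forces `M u n → 0`, while `S n⁻¹ u n - M u n = (S n⁻¹ - M) u n → 0` because `u` is
bounded.
-/

open Matrix Filter Topology Finset
open scoped MatrixOrder

variable {ι κ : Type*}

namespace Matrix

theorem PosDef.of_le {A B : Matrix ι ι ℝ} (hA : A.PosDef) (h : A ≤ B) : B.PosDef := by
  simpa using hA.add_posSemidef (le_iff.1 h)

variable [Fintype ι]

theorem norm_le_sqrt_dotProduct_self (w : ι → ℝ) : ‖w‖ ≤ √(w ⬝ᵥ w) := by
  refine (pi_norm_le_iff_of_nonneg (Real.sqrt_nonneg _)).2 fun j => ?_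
  rw [Real.norm_eq_abs]
  refine Real.abs_le_sqrt ?_
  simpa [dotProduct, sq] using
    single_le_sum (f := fun i => w i * w i) (fun i _ => mul_self_nonneg (w i)) (mem_univ j)

theorem tendsto_zero_of_dotProduct_self {l : Filter κ} {w : κ → ι → ℝ}
    (h : Tendsto (fun k => w k ⬝ᵥ w k) l (𝓝 0)) : Tendsto w l (𝓝 0) := by
  refine squeeze_zero_norm (fun k => norm_le_sqrt_dotProduct_self (w k)) ?_
  simpa using h.sqrt

theorem tendsto_mulVec_zero_of_isBoundedUnder {l : Filter κ} {A : κ → Matrix ι ι ℝ}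
    {w : κ → ι → ℝ} (hA : Tendsto A l (𝓝 0)) (hw : IsBoundedUnder (· ≤ ·) l fun k => ‖w k‖) :
    Tendsto (fun k => A k *ᵥ w k) l (𝓝 0) := by
  refine tendsto_pi_nhds.2 fun i => ?_
  simpa [mulVec, dotProduct] using tendsto_finsetSum univ fun j _ =>
    ((hA.apply_nhds i).apply_nhds j).zero_mul_isBoundedUnder_le
      (hw.mono_le (Eventually.of_forall fun k => norm_le_pi_norm (w k) j))

theorem dotProduct_mulVec_le_of_le {A B : Matrix ι ι ℝ} (h : A ≤ B) (x : ι → ℝ) :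
    x ⬝ᵥ A *ᵥ x ≤ x ⬝ᵥ B *ᵥ x := by
  have := (le_iff.1 h).dotProduct_mulVec_nonneg x
  rwa [star_trivial, sub_mulVec, dotProduct_sub, sub_nonneg] at this

theorem IsHermitian.dotProduct_mulVec_comm {A : Matrix ι ι ℝ} (hA : A.IsHermitian)
    (x y : ι → ℝ) : x ⬝ᵥ A *ᵥ y = y ⬝ᵥ A *ᵥ x := by
  rw [dotProduct_mulVec, ← mulVec_transpose, ← conjTranspose_eq_transpose_of_trivial, hA,
    dotProduct_comm]

theorem isClosed_setOf_posSemidef : IsClosed {A : Matrix ι ι ℝ | A.PosSemidef} := by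
  simp only [posSemidef_iff_dotProduct_mulVec, star_trivial, Set.ofPred_and, Set.ofPred_forall]
  exact (isClosed_eq continuous_id.matrix_conjTranspose continuous_id).inter <|
    isClosed_iInter fun x => isClosed_le continuous_const <|
      continuous_const.dotProduct (continuous_id.matrix_mulVec continuous_const)

instance : OrderClosedTopology (Matrix ι ι ℝ) where
  isClosed_le' := isClosed_setOf_posSemidef.preimage (continuous_snd.sub continuous_fst)

theorem dotProduct_mulVec_vecMulVec_self (v x : ι → ℝ) :
    x ⬝ᵥ vecMulVec v v *ᵥ x = (v ⬝ᵥ x) ^ 2 := by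
  rw [vecMulVec_mulVec, dotProduct_comm]
  simp [sq]

theorem posDef_sum_vecMulVec (s : Finset κ) (u : κ → ι → ℝ)
    (h : ∀ x, (∀ i ∈ s, u i ⬝ᵥ x = 0) → x = 0) : (∑ i ∈ s, vecMulVec (u i) (u i)).PosDef := by
  have hpsd : (∑ i ∈ s, vecMulVec (u i) (u i)).PosSemidef :=
    posSemidef_sum s fun i _ => by simpa using posSemidef_vecMulVec_self_star (u i)
  refine .of_dotProduct_mulVec_pos hpsd.isHermitian fun x hx => ?_
  rw [star_trivial, sum_mulVec, dotProduct_sum]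
  simp_rw [dotProduct_mulVec_vecMulVec_self]
  obtain ⟨i, hi, hix⟩ : ∃ i ∈ s, u i ⬝ᵥ x ≠ 0 := by
    by_contra! hall
    exact hx (h x hall)
  exact sum_pos' (fun i _ => sq_nonneg _) ⟨i, hi, by positivity⟩

variable [DecidableEq ι]

-- Equality holds at `z = A⁻¹ *ᵥ x`: this variational formula for `x ⬝ᵥ A⁻¹ *ᵥ x` is what makes
-- inversion antitone.
theorem PosDef.two_mul_dotProduct_sub_le {A : Matrix ι ι ℝ} (hA : A.PosDef) (x z : ι → ℝ) :
    2 * (z ⬝ᵥ x) - z ⬝ᵥ A *ᵥ z ≤ x ⬝ᵥ A⁻¹ *ᵥ x := by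
  set y := A⁻¹ *ᵥ x
  have hx : A *ᵥ y = x := by
    rw [mulVec_mulVec, mul_nonsing_inv _ ((isUnit_iff_isUnit_det A).1 hA.isUnit), one_mulVec]
  have hsq := hA.posSemidef.dotProduct_mulVec_nonneg (y - z)
  rw [star_trivial, mulVec_sub, dotProduct_sub, sub_dotProduct, sub_dotProduct,
    hA.isHermitian.dotProduct_mulVec_comm y z, hx, dotProduct_comm y x] at hsq
  linarith

theorem PosDef.inv_le_inv {A B : Matrix ι ι ℝ} (hA : A.PosDef) (h : A ≤ B) : B⁻¹ ≤ A⁻¹ := by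
  have hB := hA.of_le h
  refine PosSemidef.of_dotProduct_mulVec_nonneg
    (hA.inv.isHermitian.sub hB.inv.isHermitian) fun x => ?_
  rw [star_trivial, sub_mulVec, dotProduct_sub, sub_nonneg]
  set y := B⁻¹ *ᵥ x
  have hx : B *ᵥ y = x := by
    rw [mulVec_mulVec, mul_nonsing_inv _ ((isUnit_iff_isUnit_det B).1 hB.isUnit), one_mulVec]
  calc x ⬝ᵥ B⁻¹ *ᵥ x = 2 * (y ⬝ᵥ x) - y ⬝ᵥ B *ᵥ y := by
        rw [hx, dotProduct_comm x y]; ring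
    _ ≤ 2 * (y ⬝ᵥ x) - y ⬝ᵥ A *ᵥ y := by linarith [dotProduct_mulVec_le_of_le h y]
    _ ≤ x ⬝ᵥ A⁻¹ *ᵥ x := hA.two_mul_dotProduct_sub_le x y

theorem IsHermitian.apply_eq_polarization {A : Matrix ι ι ℝ} (hA : A.IsHermitian) (i j : ι) :
    A i j = ((Pi.single i 1 + Pi.single j 1) ⬝ᵥ A *ᵥ (Pi.single i 1 + Pi.single j 1)
      - Pi.single i 1 ⬝ᵥ A *ᵥ Pi.single i 1 - Pi.single j 1 ⬝ᵥ A *ᵥ Pi.single j 1) / 2 := by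
  have := hA.dotProduct_mulVec_comm (Pi.single i 1) (Pi.single j 1)
  simp only [mulVec_add, dotProduct_add, add_dotProduct, single_dotProduct, mulVec_single,
    MulOpposite.op_one, one_smul, col_apply, one_mul] at this ⊢
  linarith

theorem exists_tendsto_of_antitone {A : ℕ → Matrix ι ι ℝ} (hA : Antitone A)
    (h0 : ∀ n, 0 ≤ A n) : ∃ M, Tendsto A atTop (𝓝 M) := by
  have hq : ∀ x, ∃ c, Tendsto (fun n => x ⬝ᵥ A n *ᵥ x) atTop (𝓝 c) := fun x =>
    ⟨_, tendsto_atTop_ciInf (fun m n hmn => dotProduct_mulVec_le_of_le (hA hmn) x)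
      ⟨0, Set.forall_mem_range.2 fun n => by
        simpa using dotProduct_mulVec_le_of_le (h0 n) x⟩⟩
  choose c hc using hq
  refine ⟨of fun i j => (c (Pi.single i 1 + Pi.single j 1) - c (Pi.single i 1)
    - c (Pi.single j 1)) / 2, tendsto_pi_nhds.2 fun i => tendsto_pi_nhds.2 fun j => ?_⟩
  simp_rw [(h0 _).posSemidef.isHermitian.apply_eq_polarization i j]
  exact (((hc _).sub (hc _)).sub (hc _)).div_const 2

theorem tendsto_mulVec_zero_of_dotProduct_mulVec {l : Filter κ} {M : Matrix ι ι ℝ}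
    (hM : 0 ≤ M) {w : κ → ι → ℝ} (h : Tendsto (fun k => w k ⬝ᵥ M *ᵥ w k) l (𝓝 0)) :
    Tendsto (fun k => M *ᵥ w k) l (𝓝 0) := by
  obtain ⟨B, rfl⟩ := CStarAlgebra.nonneg_iff_eq_star_mul_self.mp hM
  have hB : Tendsto (fun k => B *ᵥ w k) l (𝓝 0) := by
    refine tendsto_zero_of_dotProduct_self (h.congr fun k => ?_)
    rw [← mulVec_mulVec, dotProduct_mulVec, star_eq_conjTranspose, vecMul_conjTranspose,
      star_trivial, star_trivial]
  have hcont : Continuous fun w : ι → ℝ => star B *ᵥ w :=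
    continuous_const.matrix_mulVec continuous_id
  simpa [Function.comp_def, ← mulVec_mulVec] using (hcont.tendsto' 0 0 (mulVec_zero _)).comp hB

theorem sum_dotProduct_inv_mulVec_eq_card (s : Finset κ) (u : κ → ι → ℝ)
    (h : IsUnit (∑ i ∈ s, vecMulVec (u i) (u i))) :
    ∑ i ∈ s, u i ⬝ᵥ (∑ j ∈ s, vecMulVec (u j) (u j))⁻¹ *ᵥ u i = Fintype.card ι := by
  set S := ∑ j ∈ s, vecMulVec (u j) (u j)
  calc ∑ i ∈ s, u i ⬝ᵥ S⁻¹ *ᵥ u i = (S⁻¹ * S).trace := by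
        simp_rw [S, mul_sum, trace_sum, mul_vecMulVec, trace_vecMulVec, dotProduct_comm]
    _ = Fintype.card ι := by
        rw [nonsing_inv_mul _ ((isUnit_iff_isUnit_det S).1 h), trace_one]

end Matrix

section Scatter

variable [Fintype ι]

def scatterMatrix (u : ℕ → ι → ℝ) (n : ℕ) : Matrix ι ι ℝ :=
  ∑ i ∈ range n, vecMulVec (u i) (u i)

theorem scatterMatrix_mono (u : ℕ → ι → ℝ) : Monotone (scatterMatrix u) := fun _ _ hmn =>
  sum_le_sum_of_subset_of_nonneg (range_mono hmn) fun i _ _ => by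
    simpa using (posSemidef_vecMulVec_self_star (u i)).nonneg

theorem posDef_scatterMatrix_of_linearIndependent {d : ℕ} {u : ℕ → Fin d → ℝ}
    (h : LinearIndependent ℝ fun i : Fin d => u i) : (scatterMatrix u d).PosDef := by
  have hinj : Function.Injective (of fun i : Fin d => u i).mulVec :=
    mulVec_injective_iff_isUnit.2 (linearIndependent_rows_iff_isUnit.1 h)
  refine posDef_sum_vecMulVec _ _ fun x hx => hinj ?_
  rw [mulVec_zero]
  exact funext fun i => hx i (mem_range.2 i.2)

theorem tendsto_inv_scatterMatrix_mulVec [DecidableEq ι] {u : ℕ → ι → ℝ} {C : ℝ}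
    (hC : ∀ n, ‖u n‖ ≤ C) {n₀ : ℕ} (hn₀ : (scatterMatrix u n₀).PosDef) :
    Tendsto (fun n => (scatterMatrix u n)⁻¹ *ᵥ u n) atTop (𝓝 0) := by
  set T := fun k => (scatterMatrix u (k + n₀))⁻¹
  have hpos : ∀ k, (scatterMatrix u (k + n₀)).PosDef := fun k =>
    hn₀.of_le (scatterMatrix_mono u (by omega))
  have hT0 : ∀ k, 0 ≤ T k := fun k => (hpos k).inv.posSemidef.nonneg
  have hT : Antitone T := fun j k hjk => (hpos j).inv_le_inv (scatterMatrix_mono u (by omega))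
  obtain ⟨M, hM⟩ := exists_tendsto_of_antitone hT hT0
  have hM0 : 0 ≤ M := ge_of_tendsto' hM hT0
  have hsum : ∀ k, ∑ i ∈ range k, u i ⬝ᵥ M *ᵥ u i ≤ Fintype.card ι := fun k => calc
    _ ≤ ∑ i ∈ range k, u i ⬝ᵥ T k *ᵥ u i :=
        sum_le_sum fun i _ => dotProduct_mulVec_le_of_le (hT.le_of_tendsto hM k) (u i)
    _ ≤ ∑ i ∈ range (k + n₀), u i ⬝ᵥ T k *ᵥ u i :=
        sum_le_sum_of_subset_of_nonneg (range_mono (by omega)) fun i _ _ => by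
          simpa using dotProduct_mulVec_le_of_le (hT0 k) (u i)
    _ = Fintype.card ι := sum_dotProduct_inv_mulVec_eq_card _ u (hpos k).isUnit
  have hMu : Tendsto (fun k => M *ᵥ u k) atTop (𝓝 0) := by
    refine tendsto_mulVec_zero_of_dotProduct_mulVec hM0 ?_
    refine (summable_of_sum_range_le (fun i => ?_) hsum).tendsto_atTop_zero
    simpa using dotProduct_mulVec_le_of_le hM0 (u i)
  have hTu : Tendsto (fun k => (T k - M) *ᵥ u (k + n₀)) atTop (𝓝 0) :=
    tendsto_mulVec_zero_of_isBoundedUnder (by simpa using hM.sub_const M)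
      (isBoundedUnder_of ⟨C, fun k => hC _⟩)
  rw [← tendsto_add_atTop_iff_nat n₀]
  simpa [T, sub_mulVec] using hTu.add (hMu.comp (tendsto_add_atTop_nat n₀))

end Scatter

/-- Lemma A.1 (convergence lemma): if `‖u_n‖ ≤ 1` for all `n ≥ 1` and
`u₁, …, u_d` are linearly independent, then
`y_n = (u₁u₁ᵗ + ⋯ + u_{n-1}u_{n-1}ᵗ)⁻¹ u_n → 0`. -/
theorem inv_cov_mulVec_tendsto_zero
    (d : ℕ) (u : ℕ → Fin d → ℝ)
    (hnorm : ∀ n : ℕ, 1 ≤ n → Real.sqrt (u n ⬝ᵥ u n) ≤ 1)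
    (hli : LinearIndependent ℝ (fun i : Fin d => u ((i : ℕ) + 1))) :
    Tendsto
      (fun n : ℕ =>
        (∑ i ∈ Finset.Icc 1 (n - 1), vecMulVec (u i) (u i))⁻¹.mulVec (u n))
      atTop (nhds 0) := by
  set v : ℕ → Fin d → ℝ := fun k => u (k + 1)
  have hv : ∀ k, ‖v k‖ ≤ 1 := fun k =>
    (norm_le_sqrt_dotProduct_self (v k)).trans (hnorm (k + 1) (by omega))
  have hlim := (tendsto_inv_scatterMatrix_mulVec hv
    (posDef_scatterMatrix_of_linearIndependent hli)).comp (tendsto_sub_atTop_nat 1)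
  refine hlim.congr' ((eventually_ge_atTop 1).mono fun n hn => ?_)
  dsimp only [Function.comp_apply, v, scatterMatrix]
  rw [Nat.sub_add_cancel hn, range_eq_Ico, sum_Ico_add' fun i => vecMulVec (u i) (u i), zero_add,
    Ico_add_one_right_eq_Icc]
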